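/- arXiv:1902.07109 — 2 statements merged into one kernel-verified Lean document; each statement's English description precedes it below -/
import Mathlib

section
/- Let n be a positive integer. (i) If n > 9, then 𝒮_9(n) is full if and only if 9n − 2 is not a perfect square. (ii) If n > 10, then 𝒮_10(n) is full if and only if either n is odd and neither 10n − 1 nor 10n − 5 is a perfect square, or n is even and 10n − 4 is not a perfect square. (iii) If n > 11, then 𝒮_11(n) is full if and only if none of 11n − 2, 11n − 6, 11n − 8 is a perfect square. -/
/-- `S m n` is the set of integers `T` such that there exist integers
`x₁,…,x_m` with `x₁+⋯+x_m = T` and `x₁²+⋯+x_m² = n`. -/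
def S (m n : ℕ) : Set ℤ :=
  {T : ℤ | ∃ x : Fin m → ℤ, (∑ i, x i) = T ∧ (∑ i, (x i) ^ 2) = (n : ℤ)}

/-- `sos m` is the set of integers expressible as a sum of `m` squares of integers. -/
def sos (m : ℕ) : Set ℤ :=
  {n : ℤ | ∃ a : Fin m → ℤ, (∑ i, (a i) ^ 2) = n}

/-- The binary quadratic form `aX² + 2hXY + bY²` is a sum of `m` squares of
integral linear forms. -/
def IsSumSqLin (m : ℕ) (a h b : ℤ) : Prop :=
  ∃ α β : Fin m → ℤ,
    (∑ i, (α i) ^ 2) = a ∧ (∑ i, α i * β i) = h ∧ (∑ i, (β i) ^ 2) = b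

/-- `S m n` is full: every `T` with `T ≡ n (mod 2)` and `T² < mn` lies in `S m n`. -/
def Sfull (m n : ℕ) : Prop :=
  ∀ T : ℤ, T % 2 = (n : ℤ) % 2 → T ^ 2 < (m : ℤ) * n → T ∈ S m n

/-!
For `x` with `∑ x = T` and `∑ x ^ 2 = n`, the number `d = m n - T²` is the dispersion
`m ∑ x² - (∑ x)²`, which is invariant under translation of `x`; so `T ∈ S m n` as soon as some
`y` with `∑ y ≡ T (mod m)` has dispersion `d`.

A nonconstant vector has dispersion at least `m - 1`: shift one coordinate to `0` and apply
Cauchy–Schwarz on the support. Hence `0 < d < m - 1` is never attained.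

Conversely, `T ≡ n (mod 2)` forces `d ≡ r (m - r) (mod 2m)` with `r = T mod m`. A `0`–`1` vector
`(v, v, z)` with `r` ones has dispersion `r (m - r)`, and adding `(a, -a, 0)`, where `a` runs over
four squares summing to `M`, adds `2 m M`. For `9 ≤ m ≤ 11` one has `r (m - r) - 2m < m - 1`, so
every `d ≥ m - 1` of the right parity is attained, and the exceptional values of `d` are those
in `(0, m - 1)` allowed by the congruence.
-/

open Finset

section Dispersion

variable {ι κ : Type*} [Fintype ι] [Fintype κ]

def dispersion (x : ι → ℤ) : ℤ :=
  Fintype.card ι * ∑ i, x i ^ 2 - (∑ i, x i) ^ 2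

lemma dispersion_add_const (x : ι → ℤ) (c : ℤ) :
    dispersion (fun i => x i + c) = dispersion x := by
  simp only [dispersion, add_sq, sum_add_distrib, ← sum_mul, ← mul_sum, sum_const, card_univ,
    nsmul_eq_mul]
  ring

lemma dispersion_comp_equiv (e : κ ≃ ι) (x : ι → ℤ) : dispersion (x ∘ e) = dispersion x := by
  simp only [dispersion, Function.comp_apply, Fintype.card_congr e,
    e.sum_comp (fun i => x i ^ 2), e.sum_comp x]

lemma dispersion_add_of_orthogonal (u w : ι → ℤ) (hu : ∑ i, u i = 0)
    (huw : ∑ i, u i * w i = 0) :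
    dispersion (u + w) = dispersion w + Fintype.card ι * ∑ i, u i ^ 2 := by
  simp only [dispersion, Pi.add_apply, add_sq, sum_add_distrib, ← mul_sum, hu, mul_assoc, huw]
  ring

lemma dispersion_of_sq_eq_self (w : ι → ℤ) (hw : ∀ i, w i ^ 2 = w i) :
    dispersion w = Fintype.card ι * ∑ i, w i - (∑ i, w i) ^ 2 := by
  simp only [dispersion, hw]

lemma card_sub_one_le_dispersion (x : ι → ℤ) (hx : dispersion x ≠ 0) :
    (Fintype.card ι : ℤ) - 1 ≤ dispersion x := by
  classical
  obtain ⟨i₀⟩ : Nonempty ι := by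
    by_contra h
    simp_all [dispersion, not_nonempty_iff]
  -- once `y i₀ = 0`, Cauchy–Schwarz on the support `B` of `y` gives
  -- `dispersion y ≥ (m - #B) * #B`, with `1 ≤ #B ≤ m - 1`
  rw [← dispersion_add_const x (-x i₀)] at hx ⊢
  generalize hy : (fun i => x i + -x i₀) = y at hx ⊢
  have hi₀ : y i₀ = 0 := by simp [← hy]
  set B : Finset ι := {i | y i ≠ 0}
  have hsum : ∑ i, y i = ∑ i ∈ B, y i := (sum_filter_ne_zero _).symm
  have hsq : ∑ i, y i ^ 2 = ∑ i ∈ B, y i ^ 2 := by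
    rw [sum_filter_of_ne]; intro i _ h; simpa using h
  have hB : (#B : ℤ) ≤ ∑ i ∈ B, y i ^ 2 := by
    rw [card_eq_sum_ones, Nat.cast_sum, Nat.cast_one]
    refine sum_le_sum fun i hi => ?_
    have : y i ≠ 0 := (mem_filter.mp hi).2
    have := sq_pos_of_ne_zero this
    omega
  have hCS := sq_sum_le_card_mul_sum_sq (s := B) (f := y)
  have hBlt : #B < Fintype.card ι := card_lt_univ_of_notMem (x := i₀) (by simp [B, hi₀])
  have hBpos : 0 < #B := by
    rw [card_pos, nonempty_iff_ne_empty]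
    rintro hBe
    simp [dispersion, hsum, hsq, hBe] at hx
  unfold dispersion
  rw [hsum, hsq]
  have h1 : (1 : ℤ) ≤ #B := by exact_mod_cast hBpos
  have h2 : (#B : ℤ) + 1 ≤ Fintype.card ι := by exact_mod_cast hBlt
  nlinarith [mul_le_mul_of_nonneg_left hB (by linarith : (0 : ℤ) ≤ Fintype.card ι - #B),
    mul_nonneg (sub_nonneg.2 h1) (by linarith : (0 : ℤ) ≤ Fintype.card ι - 1 - #B)]

end Dispersion

lemma sq_emod_two (a : ℤ) : a ^ 2 % 2 = a % 2 := by
  obtain ⟨j, hj⟩ := Int.even_mul_pred_self a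
  have : a ^ 2 = a * (a - 1) + a := by ring
  omega

lemma mem_S_of_dispersion_eq {ι : Type*} [Fintype ι] {m n : ℕ} {T : ℤ} (hm : 0 < m)
    (hcard : Fintype.card ι = m) (y : ι → ℤ) (hsum : ∑ i, y i ≡ T [ZMOD m])
    (hy : dispersion y = m * n - T ^ 2) : T ∈ S m n := by
  obtain ⟨c, hc⟩ := hsum.dvd
  set x : Fin m → ℤ := fun j => (y ∘ (Fintype.equivFinOfCardEq hcard).symm) j + c
  have hx : dispersion x = dispersion y := by
    rw [dispersion_add_const, dispersion_comp_equiv]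
  have hxsum : ∑ j, x j = T := by
    simp only [x, sum_add_distrib, Function.comp_apply, Equiv.sum_comp, sum_const, card_univ,
      Fintype.card_fin, nsmul_eq_mul]
    linarith
  refine ⟨x, hxsum, ?_⟩
  rw [← hx, dispersion, Fintype.card_fin, hxsum] at hy
  exact mul_left_cancel₀ (by exact_mod_cast hm.ne') (sub_left_inj.mp hy)

lemma sub_one_le_of_mem_S {m n : ℕ} {T : ℤ} (hT : T ∈ S m n) (hne : T ^ 2 ≠ m * n) :
    (m : ℤ) - 1 ≤ m * n - T ^ 2 := by
  obtain ⟨x, hsum, hsq⟩ := hT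
  have hx : dispersion x = m * n - T ^ 2 := by
    rw [dispersion, Fintype.card_fin, hsum, hsq]
  simpa [hx] using card_sub_one_le_dispersion x (by rw [hx]; exact sub_ne_zero.2 hne.symm)

lemma exists_sub_sq_eq {m n : ℕ} {T : ℤ} (hm : 0 < m) (hpar : T % 2 = n % 2) :
    ∃ r : ℕ, r < m ∧ r ≡ T [ZMOD m] ∧ ∃ M : ℤ, m * n - T ^ 2 = r * (m - r) + 2 * m * M := by
  obtain ⟨r, hr⟩ : ∃ r : ℕ, T % m = r := Int.eq_ofNat_of_zero_le (Int.emod_nonneg T (by omega))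
  have hrm : (r : ℤ) < m := hr ▸ Int.emod_lt_of_pos T (by omega)
  refine ⟨r, by omega, hr ▸ Int.mod_modEq T m, ?_⟩
  obtain ⟨j, hj⟩ := Int.even_mul_pred_self (T / m)
  obtain ⟨h, hh⟩ : ∃ h, (n : ℤ) - T = 2 * h := ⟨(n - T) / 2, by omega⟩
  refine ⟨h - m * j - T / m * r, ?_⟩
  have hT := Int.emod_add_mul_ediv T m
  rw [hr] at hT
  linear_combination (r + m * (T / m) + T - m) * hT + m * hh - m ^ 2 * hj

lemma exists_dispersion_eq_doubled_add {k : ℕ} (v : Fin 4 → ℤ) (z : Fin k → ℤ) (M : ℕ) :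
    ∃ y : (Fin 4 ⊕ Fin 4) ⊕ Fin k → ℤ, ∑ i, y i = 2 * ∑ i, v i + ∑ i, z i ∧
      dispersion y = dispersion (Sum.elim (Sum.elim v v) z) + 2 * (8 + k) * M := by
  obtain ⟨a, ha⟩ : ∃ a : Fin 4 → ℤ, ∑ i, a i ^ 2 = M := by
    obtain ⟨a₀, a₁, a₂, a₃, h⟩ := Nat.sum_four_squares M
    exact ⟨![a₀, a₁, a₂, a₃], by simp [Fin.sum_univ_four]; exact_mod_cast h⟩
  set u : (Fin 4 ⊕ Fin 4) ⊕ Fin k → ℤ := Sum.elim (Sum.elim a (-a)) 0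
  have hu : ∑ i, u i = 0 := by simp [u, Fintype.sum_sum_type]
  have huw : ∑ i, u i * Sum.elim (Sum.elim v v) z i = 0 := by simp [u, Fintype.sum_sum_type]
  have hu2 : ∑ i, u i ^ 2 = 2 * M := by simp [u, Fintype.sum_sum_type, ha, two_mul]
  refine ⟨u + Sum.elim (Sum.elim v v) z, ?_, ?_⟩
  · simp only [Pi.add_apply, sum_add_distrib, hu, Fintype.sum_sum_type, Sum.elim_inl,
      Sum.elim_inr]
    ring
  · rw [dispersion_add_of_orthogonal u _ hu huw, hu2]
    simp only [Fintype.card_sum, Fintype.card_fin]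
    push_cast
    ring

lemma sum_ite_val_lt {N p : ℕ} (hp : p ≤ N) :
    ∑ i : Fin N, (if (i : ℕ) < p then (1 : ℤ) else 0) = p := by
  rw [sum_boole, Fin.card_filter_val_lt, min_eq_right hp]

lemma exists_sum_eq_and_dispersion_eq {k r : ℕ} (hk : 1 ≤ k) (hr : r ≤ 8 + k) (M : ℕ) :
    ∃ y : (Fin 4 ⊕ Fin 4) ⊕ Fin k → ℤ,
      ∑ i, y i = r ∧ dispersion y = r * (8 + k - r) + 2 * (8 + k) * M := by
  -- `p` ones in each copy of `v` and the remaining `r - 2 * p ≤ k` in `z`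
  set p := min (r / 2) 4
  set v : Fin 4 → ℤ := fun i => if (i : ℕ) < p then 1 else 0
  set z : Fin k → ℤ := fun i => if (i : ℕ) < r - 2 * p then 1 else 0
  have hvz : 2 * ∑ i, v i + ∑ i, z i = r := by
    rw [sum_ite_val_lt (by omega), sum_ite_val_lt (by omega)]
    omega
  have hw : ∑ i, Sum.elim (Sum.elim v v) z i = r := by
    simpa only [Fintype.sum_sum_type, Sum.elim_inl, Sum.elim_inr, ← two_mul] using hvz
  have hw01 : ∀ i, Sum.elim (Sum.elim v v) z i ^ 2 = Sum.elim (Sum.elim v v) z i := by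
    rintro ((i | i) | i) <;> simp only [v, z, Sum.elim_inl, Sum.elim_inr] <;> split_ifs <;> norm_num
  obtain ⟨y, hsum, hy⟩ := exists_dispersion_eq_doubled_add v z M
  refine ⟨y, hsum.trans hvz, ?_⟩
  rw [hy, dispersion_of_sq_eq_self _ hw01, hw]
  simp only [Fintype.card_sum, Fintype.card_fin]
  push_cast
  ring

theorem mem_S_of_sub_one_le {m n : ℕ} {T : ℤ} (hm9 : 9 ≤ m) (hm11 : m ≤ 11)
    (hpar : T % 2 = n % 2) (hd : (m : ℤ) - 1 ≤ m * n - T ^ 2) : T ∈ S m n := by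
  obtain ⟨r, hrm, hr, M, hM⟩ := exists_sub_sq_eq (m := m) (by omega) hpar
  -- `r * (m - r) ≤ m ^ 2 / 4 < 3 * m - 1` because `m ≤ 11`, so `M < 0` would contradict `hd`
  have hM0 : 0 ≤ M := by
    have : (m : ℤ) ≤ 11 := by exact_mod_cast hm11
    nlinarith [sq_nonneg ((m : ℤ) - 2 * r)]
  obtain ⟨y, hsum, hy⟩ :=
    exists_sum_eq_and_dispersion_eq (k := m - 8) (r := r) (by omega) (by omega) M.toNat
  refine mem_S_of_dispersion_eq (by omega) (by simp only [Fintype.card_sum, Fintype.card_fin]; omega)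
    y (hsum ▸ hr) ?_
  rw [hy, hM, Int.toNat_of_nonneg hM0, Nat.cast_sub (by omega : 8 ≤ m)]
  push_cast
  ring

theorem sfull_iff_of_gaps {m n : ℕ} (hm9 : 9 ≤ m) (hm11 : m ≤ 11) (E : Set ℤ)
    (hE : ∀ e ∈ E, 0 < e ∧ e < m - 1 ∧ (m * n - e) % 2 = n % 2)
    (hgap : ∀ T : ℤ, T % 2 = n % 2 → 0 < m * n - T ^ 2 → m * n - T ^ 2 < m - 1 →
      m * n - T ^ 2 ∈ E) :
    Sfull m n ↔ ∀ e ∈ E, ¬ ∃ k : ℤ, m * n - e = k ^ 2 := by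
  constructor
  · rintro hfull e he ⟨k, hk⟩
    obtain ⟨he0, hem, hepar⟩ := hE e he
    have hkpar : k % 2 = n % 2 := by rw [← sq_emod_two, ← hk, hepar]
    have := sub_one_le_of_mem_S (hfull k hkpar (by linarith)) (by linarith)
    linarith
  · intro h T hpar hlt
    refine mem_S_of_sub_one_le hm9 hm11 hpar (not_lt.1 fun hd => ?_)
    exact h _ (hgap T hpar (by linarith) hd) ⟨T, by ring⟩

lemma sfull_nine_iff (n : ℕ) : Sfull 9 n ↔ ¬ ∃ k : ℤ, 9 * (n : ℤ) - 2 = k ^ 2 := by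
  rw [sfull_iff_of_gaps (m := 9) (by norm_num) (by norm_num) {2}
    (by simp only [Set.mem_singleton_iff, forall_eq]; omega) fun T hpar hpos hlt => ?_]
  · simp
  · obtain ⟨r, hr, -, M, hM⟩ := exists_sub_sq_eq (m := 9) (by norm_num) hpar
    push_cast at hM hlt
    rw [Set.mem_singleton_iff]
    interval_cases r <;> omega

lemma sfull_ten_iff (n : ℕ) : Sfull 10 n ↔
    ((Odd n ∧ (¬ ∃ k : ℤ, 10 * (n : ℤ) - 1 = k ^ 2) ∧ (¬ ∃ k : ℤ, 10 * (n : ℤ) - 5 = k ^ 2)) ∨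
      (Even n ∧ ¬ ∃ k : ℤ, 10 * (n : ℤ) - 4 = k ^ 2)) := by
  rcases Nat.even_or_odd n with hn | hn
  · have hn2 : (n : ℤ) % 2 = 0 := by have := Nat.even_iff.1 hn; omega
    rw [sfull_iff_of_gaps (m := 10) (by norm_num) (by norm_num) {4}
      (by simp only [Set.mem_singleton_iff, forall_eq]; omega) fun T hpar hpos hlt => ?_]
    · simp [hn, Nat.not_odd_iff_even.2 hn]
    · obtain ⟨r, hr, -, M, hM⟩ := exists_sub_sq_eq (m := 10) (by norm_num) hpar
      have := sq_emod_two T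
      push_cast at hM hlt
      rw [Set.mem_singleton_iff]
      interval_cases r <;> omega
  · have hn2 : (n : ℤ) % 2 = 1 := by have := Nat.odd_iff.1 hn; omega
    rw [sfull_iff_of_gaps (m := 10) (by norm_num) (by norm_num) {1, 5}
      (by simp only [Set.mem_insert_iff, Set.mem_singleton_iff, forall_eq_or_imp, forall_eq]; omega)
      fun T hpar hpos hlt => ?_]
    · simp [hn, Nat.not_even_iff_odd.2 hn]
    · obtain ⟨r, hr, -, M, hM⟩ := exists_sub_sq_eq (m := 10) (by norm_num) hpar
      have := sq_emod_two T
      push_cast at hM hlt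
      rw [Set.mem_insert_iff, Set.mem_singleton_iff]
      interval_cases r <;> omega

lemma sfull_eleven_iff (n : ℕ) : Sfull 11 n ↔
    ((¬ ∃ k : ℤ, 11 * (n : ℤ) - 2 = k ^ 2) ∧ (¬ ∃ k : ℤ, 11 * (n : ℤ) - 6 = k ^ 2) ∧
      (¬ ∃ k : ℤ, 11 * (n : ℤ) - 8 = k ^ 2)) := by
  rw [sfull_iff_of_gaps (m := 11) (by norm_num) (by norm_num) {2, 6, 8}
    (by simp only [Set.mem_insert_iff, Set.mem_singleton_iff, forall_eq_or_imp, forall_eq]; omega)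
    fun T hpar hpos hlt => ?_]
  · simp
  · obtain ⟨r, hr, -, M, hM⟩ := exists_sub_sq_eq (m := 11) (by norm_num) hpar
    push_cast at hM hlt
    rw [Set.mem_insert_iff, Set.mem_insert_iff, Set.mem_singleton_iff]
    interval_cases r <;> omega

theorem stmt17_general (n : ℕ) :
    (9 < n → (Sfull 9 n ↔ ¬ ∃ k : ℤ, 9 * (n : ℤ) - 2 = k ^ 2)) ∧
    (10 < n → (Sfull 10 n ↔
      ((Odd n ∧ (¬ ∃ k : ℤ, 10 * (n : ℤ) - 1 = k ^ 2) ∧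
          (¬ ∃ k : ℤ, 10 * (n : ℤ) - 5 = k ^ 2)) ∨
       (Even n ∧ ¬ ∃ k : ℤ, 10 * (n : ℤ) - 4 = k ^ 2)))) ∧
    (11 < n → (Sfull 11 n ↔
      ((¬ ∃ k : ℤ, 11 * (n : ℤ) - 2 = k ^ 2) ∧
       (¬ ∃ k : ℤ, 11 * (n : ℤ) - 6 = k ^ 2) ∧
       (¬ ∃ k : ℤ, 11 * (n : ℤ) - 8 = k ^ 2)))) :=
  ⟨fun _ => sfull_nine_iff n, fun _ => sfull_ten_iff n, fun _ => sfull_eleven_iff n⟩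

theorem stmt17 (n : ℕ) (hn : 0 < n) :
    (9 < n → (Sfull 9 n ↔ ¬ ∃ k : ℤ, 9 * (n : ℤ) - 2 = k ^ 2)) ∧
    (10 < n → (Sfull 10 n ↔
      ((Odd n ∧ (¬ ∃ k : ℤ, 10 * (n : ℤ) - 1 = k ^ 2) ∧
          (¬ ∃ k : ℤ, 10 * (n : ℤ) - 5 = k ^ 2)) ∨
       (Even n ∧ ¬ ∃ k : ℤ, 10 * (n : ℤ) - 4 = k ^ 2)))) ∧
    (11 < n → (Sfull 11 n ↔
      ((¬ ∃ k : ℤ, 11 * (n : ℤ) - 2 = k ^ 2) ∧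
       (¬ ∃ k : ℤ, 11 * (n : ℤ) - 6 = k ^ 2) ∧
       (¬ ∃ k : ℤ, 11 * (n : ℤ) - 8 = k ^ 2)))) :=
  stmt17_general n
end

section
/- (i) For every integer n with 10 ≤ n ≤ 18, 𝒮_9(n) is full, and 𝒮_9(19) is not full. (ii) For every integer m ≥ 10 and every integer n with m < n ≤ m + 6, 𝒮_m(n) is full, and 𝒮_m(m+7) is not full. -/
/-!
Every admissible `T` is realized by a vector with entries in `{0, ±1, ±2}`: with `s` entries
`±2` of signed sum `2w` and `n - 4s` entries `±1`, one needs `n - 3s ≤ m` coordinates and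
`|T - 2w| ≤ n - 4s`, and for `n ≤ m + 6` (resp. `n ≤ 18` when `m = 9`) a suitable `s ≤ 3`
exists. Conversely `3x ≤ x² + 2` for every integer `x`, so `T ∈ S m n` forces
`3T ≤ n + 2m`; this excludes `T = 13` for `S 9 19` and `T = m + 3` for `S m (m + 7)`.
-/

theorem zero_mem_S_zero (m : ℕ) : (0 : ℤ) ∈ S m 0 :=
  ⟨0, by simp, by simp⟩

theorem mem_S_one {c : ℤ} {n : ℕ} (h : c ^ 2 = n) : c ∈ S 1 n :=
  ⟨fun _ => c, by simp, by simpa using h⟩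

theorem add_mem_S_add {a b n₁ n₂ : ℕ} {T₁ T₂ : ℤ} (h₁ : T₁ ∈ S a n₁) (h₂ : T₂ ∈ S b n₂) :
    T₁ + T₂ ∈ S (a + b) (n₁ + n₂) := by
  obtain ⟨x, hx, hx'⟩ := h₁
  obtain ⟨y, hy, hy'⟩ := h₂
  refine ⟨Fin.append x y, ?_, ?_⟩
  · simp only [Fin.sum_univ_add, Fin.append_left, Fin.append_right, hx, hy]
  · simp only [Fin.sum_univ_add, Fin.append_left, Fin.append_right, hx', hy']
    push_cast
    rfl

theorem mem_S_of_le {m m' n : ℕ} {T : ℤ} (hm : m ≤ m') (h : T ∈ S m n) : T ∈ S m' n := by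
  obtain ⟨k, rfl⟩ := Nat.exists_eq_add_of_le hm
  simpa using add_mem_S_add h (zero_mem_S_zero k)

theorem natCast_mul_mem_S_mul {a n : ℕ} {T : ℤ} (h : T ∈ S a n) (k : ℕ) :
    (k : ℤ) * T ∈ S (k * a) (k * n) := by
  induction k with
  | zero => simpa using zero_mem_S_zero 0
  | succ k ih =>
    rw [Nat.succ_mul, Nat.succ_mul, Nat.cast_succ, add_one_mul]
    exact add_mem_S_add ih h

theorem mem_S_of_counts {m n : ℕ} {T : ℤ} (p q u v : ℕ) (hm : p + q + u + v ≤ m)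
    (hT : T = p - q + 2 * (u - v)) (hn : n = p + q + 4 * (u + v)) : T ∈ S m n := by
  have h := add_mem_S_add (add_mem_S_add (add_mem_S_add
    (natCast_mul_mem_S_mul (mem_S_one (c := 1) (n := 1) (by norm_num)) p)
    (natCast_mul_mem_S_mul (mem_S_one (c := -1) (n := 1) (by norm_num)) q))
    (natCast_mul_mem_S_mul (mem_S_one (c := 2) (n := 4) (by norm_num)) u))
    (natCast_mul_mem_S_mul (mem_S_one (c := -2) (n := 4) (by norm_num)) v)
  subst hT hn
  refine mem_S_of_le (by omega) ?_
  convert h using 1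
  · congr 1 <;> ring
  · ring

theorem mem_S_of_abs_sub_le {m n s : ℕ} {T w : ℤ} (hw : |w| ≤ s) (hsw : (s - w) % 2 = 0)
    (hTn : (T - n) % 2 = 0) (hband : |T - 2 * w| ≤ n - 4 * s) (hm : n ≤ m + 3 * s) :
    T ∈ S m n := by
  rw [abs_le] at hw hband
  refine mem_S_of_counts ((n - 4 * s + (T - 2 * w)) / 2).toNat
    ((n - 4 * s - (T - 2 * w)) / 2).toNat ((s + w) / 2).toNat ((s - w) / 2).toNat ?_ ?_ ?_ <;>
    omega

theorem Sfull_of_le {m n s : ℕ} (hm : n ≤ m + 3 * s) (h6 : 6 * s ≤ n + 2) (h4 : 4 * s + 2 ≤ n)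
    (hsq : (m : ℤ) * n ≤ ((n : ℤ) - 2 * s + 2) ^ 2) : Sfull m n := by
  intro T hTn hT
  have hT_le : |T| ≤ n - 2 * s := by
    have : |T| < n - 2 * s + 2 := abs_lt_of_sq_lt_sq (hT.trans_le hsq) (by omega)
    rw [abs_lt] at this
    rw [abs_le]
    omega
  rw [abs_le] at hT_le
  have hTn' : (T - n) % 2 = 0 := by omega
  by_cases hpos : 2 * (s : ℤ) ≤ T
  · exact mem_S_of_abs_sub_le (w := s) (by simp) (by simp) hTn' (by rw [abs_le]; omega) hm
  by_cases hneg : T ≤ -(2 * (s : ℤ))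
  · exact mem_S_of_abs_sub_le (w := -s) (by simp) (by omega) hTn' (by rw [abs_le]; omega) hm
  -- for `|T| < 2s`, take `w` of the parity of `s` and as close to `T / 2` as possible
  rcases Nat.even_or_odd s with ⟨k, hk⟩ | ⟨k, hk⟩
  · exact mem_S_of_abs_sub_le (w := 0) (by simp) (by omega) hTn' (by rw [abs_le]; omega) hm
  · rcases le_or_gt 0 T with hT0 | hT0
    · exact mem_S_of_abs_sub_le (w := 1) (by rw [abs_one]; omega) (by omega) hTn'
        (by rw [abs_le]; omega) hm
    · exact mem_S_of_abs_sub_le (w := -1) (by rw [abs_neg, abs_one]; omega) (by omega) hTn'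
        (by rw [abs_le]; omega) hm

theorem three_mul_le_sq_add_two (x : ℤ) : 3 * x ≤ x ^ 2 + 2 := by
  have : 0 ≤ (x - 1) * (x - 2) := by
    rcases le_or_gt x 1 with h | h
    · exact mul_nonneg_of_nonpos_of_nonpos (by omega) (by omega)
    · exact mul_nonneg (by omega) (by omega)
  linarith

theorem le_of_mem_S {m n : ℕ} {T : ℤ} (h : T ∈ S m n) : 3 * T ≤ n + 2 * m := by
  obtain ⟨x, rfl, hx⟩ := h
  calc 3 * ∑ i, x i = ∑ i, 3 * x i := Finset.mul_sum _ _ _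
    _ ≤ ∑ i, (x i ^ 2 + 2) := Finset.sum_le_sum fun i _ => three_mul_le_sq_add_two (x i)
    _ = n + 2 * m := by simp [Finset.sum_add_distrib, hx, mul_comm]

theorem not_Sfull_of_lt {m n : ℕ} (T : ℤ) (hTn : T % 2 = n % 2) (hT : T ^ 2 < m * n)
    (hlt : n + 2 * m < 3 * T) : ¬ Sfull m n :=
  fun h => (le_of_mem_S (h T hTn hT)).not_gt hlt

theorem stmt18 :
    ((∀ n : ℕ, 10 ≤ n → n ≤ 18 → Sfull 9 n) ∧ ¬ Sfull 9 19) ∧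
    (∀ m : ℕ, 10 ≤ m →
      ((∀ n : ℕ, m < n → n ≤ m + 6 → Sfull m n) ∧ ¬ Sfull m (m + 7))) := by
  refine ⟨⟨fun n hn₁ hn₂ => ?_, not_Sfull_of_lt 13 (by norm_num) (by norm_num) (by norm_num)⟩,
    fun m hm => ⟨fun n hn₁ hn₂ => ?_, not_Sfull_of_lt (m + 3) (by omega) ?_ (by omega)⟩⟩
  · refine Sfull_of_le (s := (n - 7) / 3) (by omega) (by omega) (by omega) ?_
    interval_cases n <;> norm_num
  · rcases le_or_gt n (m + 3) with hn | hn
    · exact Sfull_of_le (s := 1) (by omega) (by omega) (by omega) (by push_cast; nlinarith)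
    · exact Sfull_of_le (s := 2) (by omega) (by omega) (by omega) (by push_cast; nlinarith)
  · push_cast
    nlinarith
end
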